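/- Let Â be a nonzero n×n real matrix, p_ij = Â_ij²/‖Â‖_F², and for each (i,j) with Â_ij ≠ 0 set M_{ij} = (Â_ij/p_ij)·e_i e_j^T − Â. Then the Gram-type second moment in the other order satisfies ‖Σ_{(i,j): Â_ij ≠ 0} p_ij · M_{ij}^T M_{ij}‖ ≤ n·‖Â‖_F², where ‖·‖ is the spectral norm. -/

import Mathlib

open Matrix

/-- The spectral (operator) norm of a real square matrix. -/
noncomputable def specNorm {n : ℕ} (A : Matrix (Fin n) (Fin n) ℝ) : ℝ :=
  ‖(Matrix.toEuclideanCLM (𝕜 := ℝ) A :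
      EuclideanSpace ℝ (Fin n) →L[ℝ] EuclideanSpace ℝ (Fin n))‖

lemma Matrix.PosSemidef.smul_real {m : Type*} [Fintype m] {A : Matrix m m ℝ} (hA : A.PosSemidef)
    {c : ℝ} (hc : 0 ≤ c) : (c • A).PosSemidef := by
  refine ⟨?_, fun x => ?_⟩
  · unfold Matrix.IsHermitian
    rw [conjTranspose_smul, hA.1]
    simp
  · exact (hA.smul hc).2 x

open scoped MatrixOrder in
lemma specNorm_le_of_psd {n : ℕ} {S : Matrix (Fin n) (Fin n) ℝ} {c : ℝ} (hc : 0 ≤ c)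
    (hS : S.PosSemidef) (h2 : (c • (1 : Matrix (Fin n) (Fin n) ℝ) - S).PosSemidef) :
    specNorm S ≤ c := by
  -- c^2 • 1 - S * S is PSD
  obtain ⟨R, hRH, hRR, hconj⟩ :
      ∃ R : Matrix (Fin n) (Fin n) ℝ, Rᴴ = R ∧ R * R = S ∧
        (R * (c • (1 : Matrix (Fin n) (Fin n) ℝ) - S) * Rᴴ).PosSemidef :=
    ⟨CFC.sqrt S, (CFC.sqrt_nonneg S).posSemidef.1, CFC.sqrt_mul_sqrt_self S hS.nonneg, h2.mul_mul_conjTranspose_same _⟩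
  have hkey : ((c^2) • (1 : Matrix (Fin n) (Fin n) ℝ) - S * S).PosSemidef := by
    have e : (c^2) • (1 : Matrix (Fin n) (Fin n) ℝ) - S * S
        = c • (c • (1 : Matrix (Fin n) (Fin n) ℝ) - S) + R * (c • (1 : Matrix (Fin n) (Fin n) ℝ) - S) * Rᴴ := by
      rw [hRH]
      have : R * (c • (1 : Matrix (Fin n) (Fin n) ℝ) - S) * R = c • S - S * S := by
        rw [mul_sub, sub_mul, mul_smul_comm, smul_mul_assoc, mul_one, hRR]
        congr 1
        rw [← hRR]
        simp only [mul_assoc]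
      rw [this, smul_sub, smul_smul, pow_two]
      abel
    rw [e]
    exact (h2.smul_real hc).add hconj
  -- pointwise bound
  have hq : ∀ y : Fin n → ℝ, (S *ᵥ y) ⬝ᵥ (S *ᵥ y) ≤ c^2 * (y ⬝ᵥ y) := by
    intro y
    have h0 := hkey.dotProduct_mulVec_nonneg y
    have hsym : Sᵀ = S := by
      rw [← conjTranspose_eq_transpose_of_trivial]; exact hS.1
    rw [sub_mulVec, smul_mulVec, one_mulVec, dotProduct_sub, dotProduct_smul,
      star_trivial, ← mulVec_mulVec, dotProduct_mulVec y S, ← mulVec_transpose, hsym] at h0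
    rw [smul_eq_mul] at h0
    linarith
  -- operator norm bound
  unfold specNorm
  refine ContinuousLinearMap.opNorm_le_bound _ hc fun x => ?_
  have hx2 : ‖x‖ ^ 2 = ∑ i, x i ^ 2 := by
    rw [EuclideanSpace.norm_eq, Real.sq_sqrt (by positivity)]
    simp [sq_abs]
  have hT2 : ‖(toEuclideanCLM (𝕜 := ℝ) S) x‖ ^ 2 = ∑ i, ((S *ᵥ (fun j => x j)) i) ^ 2 := by
    rw [EuclideanSpace.norm_eq, Real.sq_sqrt (by positivity)]
    congr 1
    ext i
    rw [Real.norm_eq_abs, sq_abs]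
    rfl
  have h1 : ‖(toEuclideanCLM (𝕜 := ℝ) S) x‖ ^ 2 ≤ (c * ‖x‖) ^ 2 := by
    have := hq (fun j => x j)
    rw [hT2]
    have e1 : ∑ i, ((S *ᵥ (fun j => x j)) i) ^ 2
        = (S *ᵥ (fun j => x j)) ⬝ᵥ (S *ᵥ (fun j => x j)) := by
      simp [dotProduct, pow_two]
    have e2 : (fun j => x j) ⬝ᵥ (fun j => x j) = ‖x‖ ^ 2 := by
      rw [hx2]; simp [dotProduct, pow_two]
    rw [e1, mul_pow]
    calc (S *ᵥ (fun j => x j)) ⬝ᵥ (S *ᵥ (fun j => x j))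
        ≤ c ^ 2 * ((fun j => x j) ⬝ᵥ (fun j => x j)) := this
      _ = c ^ 2 * ‖x‖ ^ 2 := by rw [e2]
  have hge : (0:ℝ) ≤ c * ‖x‖ := mul_nonneg hc (norm_nonneg _)
  nlinarith [norm_nonneg ((toEuclideanCLM (𝕜 := ℝ) S) x)]

section helpers
variable {n : ℕ}

lemma sum_stdBasis_diag (c : Fin n → ℝ) :
    ∑ j, single j j (c j) = diagonal c := by
  ext a b
  simp only [Matrix.sum_apply]
  by_cases h : a = b
  · subst h
    simp only [single, of_apply, diagonal_apply_eq]
    rw [Finset.sum_eq_single a] <;> simp +contextual [eq_comm]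
  · simp only [single, of_apply, diagonal_apply_ne _ h]
    apply Finset.sum_eq_zero
    intro x _
    rw [if_neg]
    rintro ⟨rfl, rfl⟩
    exact h rfl

lemma stdBasis_transpose (i j : Fin n) (c : ℝ) :
    (single i j c)ᵀ = single j i c := by
  ext a b
  simp [single, transpose_apply, and_comm]

lemma sum_entry_smul_stdBasis (A : Matrix (Fin n) (Fin n) ℝ) :
    ∑ q : Fin n × Fin n, A q.1 q.2 • single q.1 q.2 (1:ℝ) = A := by
  simp only [smul_single, smul_eq_mul, mul_one]
  rw [Fintype.sum_prod_type]
  exact (matrix_eq_sum_single A).symm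

lemma sum_entry_smul_stdBasis' (A : Matrix (Fin n) (Fin n) ℝ) :
    ∑ q : Fin n × Fin n, A q.1 q.2 • single q.2 q.1 (1:ℝ) = Aᵀ := by
  have := sum_entry_smul_stdBasis Aᵀ
  rw [Fintype.sum_prod_type] at this ⊢
  rw [Finset.sum_comm]
  convert this using 3 with j _ i
  rfl

lemma posSemidef_sum {ι : Type*} (s : Finset ι) (f : ι → Matrix (Fin n) (Fin n) ℝ)
    (h : ∀ i ∈ s, (f i).PosSemidef) : (∑ i ∈ s, f i).PosSemidef := by
  classical
  induction s using Finset.induction_on with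
  | empty => simpa using Matrix.PosSemidef.zero
  | insert _ _ hx ih =>
      rw [Finset.sum_insert hx]
      exact (h _ (Finset.mem_insert_self _ _)).add
        (ih fun i hi => h i (Finset.mem_insert_of_mem hi))

end helpers

/-- The Frobenius norm of a real square matrix. -/
noncomputable def frobNorm {n : ℕ} (A : Matrix (Fin n) (Fin n) ℝ) : ℝ :=
  Real.sqrt (∑ i, ∑ j, (A i j) ^ 2)

open Classical in
theorem second_moment_norm_bound_transposed {n : ℕ} (Ahat : Matrix (Fin n) (Fin n) ℝ)
    (hA : Ahat ≠ 0)
    (p : Fin n → Fin n → ℝ) (hp : ∀ i j, p i j = (Ahat i j) ^ 2 / frobNorm Ahat ^ 2)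
    (M : Fin n → Fin n → Matrix (Fin n) (Fin n) ℝ)
    (hM : ∀ i j, Ahat i j ≠ 0 →
      M i j = (Ahat i j / p i j) • Matrix.single i j (1 : ℝ) - Ahat) :
    specNorm (∑ q ∈ Finset.univ.filter (fun q : Fin n × Fin n => Ahat q.1 q.2 ≠ 0),
        p q.1 q.2 • ((M q.1 q.2)ᵀ * M q.1 q.2)) ≤ n * frobNorm Ahat ^ 2 := by
  classical
  set F := frobNorm Ahat ^ 2 with hFdef
  have hF : F = ∑ i, ∑ j, (Ahat i j)^2 := by
    rw [hFdef, frobNorm, Real.sq_sqrt (by positivity)]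
  have hFpos : 0 < F := by
    obtain ⟨i, j, hij⟩ : ∃ i j, Ahat i j ≠ 0 := by
      by_contra h; push_neg at h; exact hA (by ext i j; simp [h])
    rw [hF]
    calc (0:ℝ) < Ahat i j ^2 := by positivity
      _ ≤ ∑ j', Ahat i j' ^2 := Finset.single_le_sum (f := fun j' => Ahat i j' ^ 2) (fun k _ => sq_nonneg _) (Finset.mem_univ j)
      _ ≤ ∑ i', ∑ j', Ahat i' j' ^2 :=
          Finset.single_le_sum (f := fun i' => ∑ j', Ahat i' j'^2)
            (fun k _ => by positivity) (Finset.mem_univ i)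
  have hterm : ∀ q ∈ Finset.univ.filter (fun q : Fin n × Fin n => Ahat q.1 q.2 ≠ 0),
      p q.1 q.2 • ((M q.1 q.2)ᵀ * M q.1 q.2)
      = F • single q.2 q.2 (1:ℝ)
        - (Ahat q.1 q.2 • single q.2 q.1 (1:ℝ)) * Ahat
        - Ahatᵀ * (Ahat q.1 q.2 • single q.1 q.2 (1:ℝ))
        + p q.1 q.2 • (Ahatᵀ * Ahat) := by
    rintro ⟨i, j⟩ hq
    have ha : Ahat i j ≠ 0 := by simpa using hq
    have hpv : p i j = Ahat i j ^2 / F := hp i j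
    have hpne : p i j ≠ 0 := by
      rw [hpv]; exact div_ne_zero (pow_ne_zero 2 ha) hFpos.ne'
    have hc2 : p i j * (Ahat i j / p i j * (Ahat i j / p i j)) = F := by
      rw [hpv]; field_simp
    have hc1 : p i j * (Ahat i j / p i j) = Ahat i j := by field_simp
    rw [hM i j ha]
    rw [transpose_sub, transpose_smul, stdBasis_transpose]
    simp only [sub_mul, mul_sub, smul_mul_assoc, mul_smul_comm, smul_smul,
      single_mul_single_same, mul_one, smul_sub, smul_add]
    rw [hc2, hc1]
    simp only [smul_single, mul_one]
    abel
  set dr : Fin n → ℝ := fun j => ((Finset.univ.filter fun i => Ahat i j ≠ 0).card : ℝ) with hdr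
  have hSum : ∑ q ∈ Finset.univ.filter (fun q : Fin n × Fin n => Ahat q.1 q.2 ≠ 0),
      p q.1 q.2 • ((M q.1 q.2)ᵀ * M q.1 q.2)
      = diagonal (fun j => F * dr j) - Ahatᵀ * Ahat := by
    rw [Finset.sum_congr rfl hterm]
    rw [Finset.sum_add_distrib, Finset.sum_sub_distrib, Finset.sum_sub_distrib]
    have e1 : ∑ q ∈ Finset.univ.filter (fun q : Fin n × Fin n => Ahat q.1 q.2 ≠ 0),
        F • single q.2 q.2 (1:ℝ) = diagonal (fun j => F * dr j) := by
      rw [Finset.sum_filter, Fintype.sum_prod_type, Finset.sum_comm,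
        ← sum_stdBasis_diag (fun j => F * dr j)]
      refine Finset.sum_congr rfl fun j _ => ?_
      rw [← Finset.sum_filter]
      have hb : ∀ a : Fin n, single ((a, j).2) ((a, j).2) (1:ℝ) = single j j 1 :=
        fun a => rfl
      simp only [hb]
      rw [Finset.sum_const, ← Nat.cast_smul_eq_nsmul ℝ, smul_smul,
        smul_single, smul_eq_mul, mul_one, mul_comm]
    have e2 : ∑ q ∈ Finset.univ.filter (fun q : Fin n × Fin n => Ahat q.1 q.2 ≠ 0),
        (Ahat q.1 q.2 • single q.2 q.1 (1:ℝ)) * Ahat = Ahatᵀ * Ahat := by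
      rw [← Finset.sum_mul]
      congr 1
      rw [Finset.sum_filter_of_ne, sum_entry_smul_stdBasis']
      intro q _ hne h0
      exact hne (by rw [h0, zero_smul])
    have e3 : ∑ q ∈ Finset.univ.filter (fun q : Fin n × Fin n => Ahat q.1 q.2 ≠ 0),
        Ahatᵀ * (Ahat q.1 q.2 • single q.1 q.2 (1:ℝ)) = Ahatᵀ * Ahat := by
      rw [← Finset.mul_sum]
      congr 1
      rw [Finset.sum_filter_of_ne, sum_entry_smul_stdBasis]
      intro q _ hne h0
      exact hne (by rw [h0, zero_smul])
    have e4 : ∑ q ∈ Finset.univ.filter (fun q : Fin n × Fin n => Ahat q.1 q.2 ≠ 0),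
        p q.1 q.2 • (Ahatᵀ * Ahat) = Ahatᵀ * Ahat := by
      rw [← Finset.sum_smul]
      have hps : ∑ q ∈ Finset.univ.filter (fun q : Fin n × Fin n => Ahat q.1 q.2 ≠ 0),
          p q.1 q.2 = 1 := by
        rw [Finset.sum_filter_of_ne]
        · simp only [hp]
          rw [← Finset.sum_div, Fintype.sum_prod_type, ← hF]
          exact div_self hFpos.ne'
        · intro q _ hne h0
          exact hne (by rw [hp, h0]; simp)
      rw [hps, one_smul]
    rw [e1, e2, e3, e4]
    abel
  rw [hSum]
  -- positive semidefiniteness of the sum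
  have hPSD1 : (diagonal (fun j => F * dr j) - Ahatᵀ * Ahat).PosSemidef := by
    rw [← hSum]
    refine posSemidef_sum _ _ fun q hq => ?_
    have hMq : ((M q.1 q.2)ᵀ * M q.1 q.2).PosSemidef := by
      have := posSemidef_conjTranspose_mul_self (M q.1 q.2)
      rwa [conjTranspose_eq_transpose_of_trivial] at this
    exact hMq.smul_real (by rw [hp]; positivity)
  have hdrle : ∀ j, dr j ≤ (n : ℝ) := by
    intro j
    rw [hdr]
    have := Finset.card_filter_le (Finset.univ : Finset (Fin n)) (fun i => Ahat i j ≠ 0)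
    calc ((Finset.univ.filter fun i => Ahat i j ≠ 0).card : ℝ)
        ≤ ((Finset.univ : Finset (Fin n)).card : ℝ) := by exact_mod_cast this
      _ = n := by simp
  have hATA : (Ahatᵀ * Ahat).PosSemidef := by
    have := posSemidef_conjTranspose_mul_self Ahat
    rwa [conjTranspose_eq_transpose_of_trivial] at this
  have hPSD2 : (((n : ℝ) * F) • (1 : Matrix (Fin n) (Fin n) ℝ)
      - (diagonal (fun j => F * dr j) - Ahatᵀ * Ahat)).PosSemidef := by
    have e : ((n : ℝ) * F) • (1 : Matrix (Fin n) (Fin n) ℝ)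
        - (diagonal (fun j => F * dr j) - Ahatᵀ * Ahat)
        = diagonal (fun j => (n : ℝ) * F - F * dr j) + Ahatᵀ * Ahat := by
      have h1 : ((n : ℝ) * F) • (1 : Matrix (Fin n) (Fin n) ℝ)
          = diagonal (fun _ : Fin n => (n : ℝ) * F) := by
        ext a b
        by_cases h : a = b <;> simp [h, Matrix.one_apply, diagonal]
      rw [h1, ← diagonal_sub]
      abel
    rw [e]
    refine (Matrix.PosSemidef.diagonal ?_).add hATA
    intro j
    simp only [Pi.zero_apply]
    have := hdrle j
    nlinarith [hFpos]
  exact specNorm_le_of_psd (by positivity) hPSD1 hPSD2
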